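/- arXiv:1912.10429 — 2 statements merged into one kernel-verified Lean document; each statement's English description precedes it below -/
import Mathlib

section
/- Let T > 0, 0 < ε ≤ 1, and let v : ℝ² × [0,T] → ℝ² and d : ℝ² × [0,T] → ℝ³ be smooth maps that are (2πℤ)²-periodic in the space variable, such that div v = 0 on ℝ² × [0,T] and ∂_t d + (v·∇)d = Δd + ε⁻²(1−|d|²)d on ℝ² × [0,T]. If |d(x,0)| ≤ 1 for all x ∈ ℝ², then |d(x,t)| ≤ 1 for all (x,t) ∈ ℝ² × [0,T]. -/
open MeasureTheory Real Filter Topology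

noncomputable section

/-- The plane `ℝ²` as a Euclidean space. -/
abbrev E2 : Type := EuclideanSpace ℝ (Fin 2)
/-- The target space `ℝ³`. -/
abbrev E3 : Type := EuclideanSpace ℝ (Fin 3)

/-- The `i`-th standard basis vector of `ℝ²`. -/
def ee (i : Fin 2) : E2 := EuclideanSpace.single i 1

/-- Spatial partial derivative `∂ᵢ f` of a space-time function `f : ℝ² × ℝ → F`. -/
def pdx {F : Type} [NormedAddCommGroup F] [NormedSpace ℝ F]
    (i : Fin 2) (f : E2 × ℝ → F) (z : E2 × ℝ) : F := fderiv ℝ f z (ee i, 0)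

/-- Time derivative `∂ₜ f` of a space-time function `f : ℝ² × ℝ → F`. -/
def pdt {F : Type} [NormedAddCommGroup F] [NormedSpace ℝ F]
    (f : E2 × ℝ → F) (z : E2 × ℝ) : F := fderiv ℝ f z (0, 1)

/-- Spatial Laplacian `Δf = ∂₁²f + ∂₂²f` of a space-time function. -/
def lapx {F : Type} [NormedAddCommGroup F] [NormedSpace ℝ F]
    (f : E2 × ℝ → F) (z : E2 × ℝ) : F := pdx 0 (pdx 0 f) z + pdx 1 (pdx 1 f) z

/-- `(2πℤ)²`-periodicity of a map on `ℝ²`. -/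
def Periodic2 {F : Type} (f : E2 → F) : Prop :=
  ∀ (x : E2) (m n : ℤ), f (x + ((2*π*m) • ee 0 + (2*π*n) • ee 1)) = f x

open RealInnerProductSpace in
/-- Derivative of the squared norm in terms of the inner product. -/
lemma MP.fderiv_inner_self {d : E2 × ℝ → E3} (hd : Differentiable ℝ d) (z w : E2 × ℝ) :
    fderiv ℝ (fun z => (⟪d z, d z⟫ : ℝ)) z w = 2 * ⟪d z, fderiv ℝ d z w⟫ := by
  rw [fderiv_inner_apply ℝ (hd z) (hd z), real_inner_comm (fderiv ℝ d z w) (d z)]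
  ring

/-- Differentiation along a line. -/
lemma MP.line_hasDerivAt {F : Type} [NormedAddCommGroup F] [NormedSpace ℝ F]
    {f : E2 × ℝ → F} (hf : Differentiable ℝ f) (z w : E2 × ℝ) (s : ℝ) :
    HasDerivAt (fun s : ℝ => f (z + s • w)) (fderiv ℝ f (z + s • w) w) s := by
  have hL : HasDerivAt (fun s : ℝ => z + s • w) w s := by
    simpa using ((hasDerivAt_id s).smul_const w).const_add z
  exact (hf (z + s • w)).hasFDerivAt.comp_hasDerivAt s hL

/-- One-sided sign of the derivative at a maximum over `[0,T]` attained at `t₀ > 0`. -/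
lemma MP.deriv_nonneg_of_max {g : ℝ → ℝ} {c t₀ T : ℝ} (hg : HasDerivAt g c t₀)
    (hmax : ∀ s ∈ Set.Icc (0:ℝ) T, g s ≤ g t₀) (ht₀ : 0 < t₀) (htT : t₀ ≤ T) : 0 ≤ c := by
  have h1 : Tendsto (slope g t₀) (𝓝[<] t₀) (𝓝 c) :=
    (hasDerivAt_iff_tendsto_slope.1 hg).mono_left
      (nhdsWithin_mono _ fun x hx => ne_of_lt hx)
  refine ge_of_tendsto h1 ?_
  filter_upwards [Ioo_mem_nhdsLT_of_mem (Set.mem_Ioc.2 ⟨ht₀, le_refl t₀⟩)] with s hs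
  have hle : g s ≤ g t₀ := hmax s ⟨hs.1.le, hs.2.le.trans htT⟩
  rw [slope_def_field]
  rw [div_nonneg_iff]
  right
  exact ⟨by linarith, by linarith [hs.2]⟩

/-- The second derivative is nonpositive at an interior maximum. -/
lemma MP.secondDeriv_nonpos_of_max {g g' : ℝ → ℝ} {c : ℝ}
    (hg : ∀ s, HasDerivAt g (g' s) s) (hg' : HasDerivAt g' c 0)
    (hmax : ∀ s, g s ≤ g 0) : c ≤ 0 := by
  by_contra hc
  push_neg at hc
  have h0 : g' 0 = 0 := by
    have hloc : IsLocalMax g 0 := Filter.Eventually.of_forall hmax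
    exact hloc.hasDerivAt_eq_zero (hg 0)
  have h1 : Tendsto (slope g' 0) (𝓝[>] 0) (𝓝 c) :=
    (hasDerivAt_iff_tendsto_slope.1 hg').mono_left
      (nhdsWithin_mono _ fun x hx => ne_of_gt hx)
  have h2 : ∀ᶠ s in 𝓝[>] (0:ℝ), 0 < slope g' 0 s := h1.eventually (eventually_gt_nhds hc)
  obtain ⟨η, hη, hsub⟩ := mem_nhdsGT_iff_exists_Ioo_subset.1 h2
  have hηpos : (0:ℝ) < η := hη
  have hpos : ∀ s ∈ Set.Ioo (0:ℝ) η, 0 < g' s := by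
    intro s hs
    have := hsub hs
    rw [Set.mem_setOf_eq, slope_def_field, h0, sub_zero, sub_zero] at this
    rcases div_pos_iff.1 this with ⟨h, _⟩ | ⟨_, h2⟩
    · exact h
    · exact absurd hs.1 (not_lt.2 h2.le)
  have hmono : StrictMonoOn g (Set.Icc 0 η) := by
    refine strictMonoOn_of_deriv_pos (convex_Icc 0 η)
      (fun s _ => (hg s).continuousAt.continuousWithinAt) ?_
    intro s hs
    rw [interior_Icc] at hs
    rw [(hg s).deriv]
    exact hpos s hs
  have : g 0 < g η := hmono ⟨le_refl 0, hηpos.le⟩ ⟨hηpos.le, le_refl η⟩ hηpos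
  exact absurd (hmax η) (not_le.2 this)

open RealInnerProductSpace in
/-- **Maximum principle (Lemma 3.1).** If `(v, d)` is a smooth, spatially periodic solution of
the director equation of the Ginzburg–Landau approximation on `ℝ² × [0,T]`, with `div v = 0`,
and `|d(·,0)| ≤ 1`, then `|d| ≤ 1` on `ℝ² × [0,T]`. -/
theorem maximum_principle
    (T : ℝ) (hT : 0 < T) (ε : ℝ) (hε : 0 < ε) (hε1 : ε ≤ 1)
    (v : E2 × ℝ → E2) (d : E2 × ℝ → E3)
    (hv : ContDiff ℝ (⊤ : ℕ∞) v) (hd : ContDiff ℝ (⊤ : ℕ∞) d)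
    (hvper : ∀ t : ℝ, Periodic2 (fun x => v (x, t)))
    (hdper : ∀ t : ℝ, Periodic2 (fun x => d (x, t)))
    (hdiv : ∀ (x : E2) (t : ℝ), t ∈ Set.Icc 0 T →
      pdx 0 (fun z => v z 0) (x, t) + pdx 1 (fun z => v z 1) (x, t) = 0)
    (heq : ∀ (x : E2) (t : ℝ), t ∈ Set.Icc 0 T →
      pdt d (x, t) + v (x, t) 0 • pdx 0 d (x, t) + v (x, t) 1 • pdx 1 d (x, t)
        = lapx d (x, t) + ((1 - ‖d (x, t)‖ ^ 2) / ε ^ 2) • d (x, t))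
    (hini : ∀ x : E2, ‖d (x, 0)‖ ≤ 1) :
    ∀ (x : E2) (t : ℝ), t ∈ Set.Icc 0 T → ‖d (x, t)‖ ≤ 1 := by
  intro X τ hτ
  by_contra hgt
  push_neg at hgt
  have hdd : Differentiable ℝ d := hd.differentiable (by simp)
  set f : E2 × ℝ → ℝ := fun z => (⟪d z, d z⟫ : ℝ) with hf_def
  have hf : ContDiff ℝ (⊤ : ℕ∞) f := hd.inner ℝ hd
  have hfd : Differentiable ℝ f := hf.differentiable (by simp)
  have hfnorm : ∀ z, f z = ‖d z‖ ^ 2 := fun z => real_inner_self_eq_norm_sq _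
  have hπ : (0:ℝ) < 2 * π := by positivity
  -- a compact fundamental domain
  set Q : Set E2 := (fun p : ℝ × ℝ => p.1 • ee 0 + p.2 • ee 1) ''
    (Set.Icc 0 (2*π) ×ˢ Set.Icc 0 (2*π)) with hQ_def
  have hQc : IsCompact Q := (isCompact_Icc.prod isCompact_Icc).image
    ((continuous_fst.smul continuous_const).add (continuous_snd.smul continuous_const))
  have hQne : Q.Nonempty :=
    ⟨(0:ℝ) • ee 0 + (0:ℝ) • ee 1, ⟨(0,0), ⟨⟨le_refl _, hπ.le⟩, ⟨le_refl _, hπ.le⟩⟩, rfl⟩⟩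
  -- periodic reduction to the fundamental domain
  have hxdecomp : ∀ x : E2, ∃ x' ∈ Q, ∀ s : ℝ, d (x, s) = d (x', s) := by
    intro x
    set m : ℤ := ⌊x 0 / (2*π)⌋ with hm
    set n : ℤ := ⌊x 1 / (2*π)⌋ with hn
    set a : ℝ := x 0 - 2*π*m with ha_def
    set b : ℝ := x 1 - 2*π*n with hb_def
    have h1 := Int.sub_floor_div_mul_nonneg (x 0) hπ
    have h2 := Int.sub_floor_div_mul_lt (x 0) hπ
    have h3 := Int.sub_floor_div_mul_nonneg (x 1) hπ
    have h4 := Int.sub_floor_div_mul_lt (x 1) hπ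
    have hc0 : (m:ℝ) * (2*π) = 2*π*m := by ring
    have hc1 : (n:ℝ) * (2*π) = 2*π*n := by ring
    have ha : a ∈ Set.Icc (0:ℝ) (2*π) := by
      constructor
      · rw [ha_def]; rw [hm]; linarith [h1, hc0]
      · rw [ha_def]; rw [hm]; linarith [h2, hc0]
    have hb : b ∈ Set.Icc (0:ℝ) (2*π) := by
      constructor
      · rw [hb_def]; rw [hn]; linarith [h3, hc1]
      · rw [hb_def]; rw [hn]; linarith [h4, hc1]
    refine ⟨a • ee 0 + b • ee 1, ⟨(a, b), ⟨ha, hb⟩, rfl⟩, ?_⟩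
    intro s
    have hper := hdper s (a • ee 0 + b • ee 1) m n
    have hxeq : (a • ee 0 + b • ee 1) + ((2*π*(m:ℝ)) • ee 0 + (2*π*(n:ℝ)) • ee 1) = x := by
      ext i
      fin_cases i <;>
        simp [ee, EuclideanSpace.single_apply, ha_def, hb_def] <;> ring
    rw [← hxeq]
    exact hper
  -- maximum over the compact set
  set K : Set (E2 × ℝ) := Q ×ˢ Set.Icc 0 T with hK_def
  have hKc : IsCompact K := hQc.prod isCompact_Icc
  have hKne : K.Nonempty := hQne.prod ⟨0, le_refl 0, hT.le⟩
  obtain ⟨⟨x₀, t₀⟩, hz₀K, hz₀max⟩ := hKc.exists_isMaxOn hKne hfd.continuous.continuousOn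
  have ht₀Icc : t₀ ∈ Set.Icc 0 T := hz₀K.2
  set M : ℝ := f (x₀, t₀) with hM_def
  have hM : ∀ (x : E2) (s : ℝ), s ∈ Set.Icc 0 T → f (x, s) ≤ M := by
    intro x s hs
    obtain ⟨x', hx'Q, hx'⟩ := hxdecomp x
    have : f (x, s) = f (x', s) := by rw [hf_def]; simp only [hx' s]
    rw [this]
    exact hz₀max (Set.mem_prod.2 ⟨hx'Q, hs⟩)
  have hM1 : 1 < M := by
    have h1 : (1:ℝ) < ‖d (X, τ)‖ ^ 2 := by nlinarith [hgt, norm_nonneg (d (X, τ))]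
    have := hM X τ hτ
    rw [hfnorm] at this
    linarith
  have ht₀pos : 0 < t₀ := by
    rcases lt_or_eq_of_le ht₀Icc.1 with h | h
    · exact h
    · exfalso
      have : M = ‖d (x₀, 0)‖ ^ 2 := by rw [hM_def, ← h, hfnorm]
      nlinarith [hini x₀, norm_nonneg (d (x₀, 0))]
  -- spatial derivatives of d
  have hu : ∀ i : Fin 2, ContDiff ℝ (⊤ : ℕ∞) (pdx i d) := by
    intro i
    unfold pdx
    exact (hd.fderiv_right (by simp)).clm_apply contDiff_const
  have hud : ∀ i : Fin 2, Differentiable ℝ (pdx i d) := fun i => (hu i).differentiable (by simp)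
  -- first spatial derivatives of f in terms of d
  have hpdx_f : ∀ (i : Fin 2) (z : E2 × ℝ), pdx i f z = 2 * ⟪d z, pdx i d z⟫ := by
    intro i z
    exact MP.fderiv_inner_self hdd z (ee i, 0)
  have hpdt_f : ∀ z : E2 × ℝ, pdt f z = 2 * ⟪d z, pdt d z⟫ := by
    intro z
    exact MP.fderiv_inner_self hdd z (0, 1)
  have hfdiffx : ∀ i : Fin 2, Differentiable ℝ (pdx i f) := by
    intro i
    unfold pdx
    exact (((hf.fderiv_right (m := (⊤ : ℕ∞)) (by simp)).clm_apply contDiff_const)).differentiable (by simp)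
  -- second spatial derivatives of f in terms of d
  have hpdx2_f : ∀ (i : Fin 2) (z : E2 × ℝ),
      pdx i (pdx i f) z = 2 * ⟪d z, pdx i (pdx i d) z⟫ + 2 * ‖pdx i d z‖ ^ 2 := by
    intro i z
    have hrw : pdx i f = fun z => 2 * ⟪d z, pdx i d z⟫ := funext (hpdx_f i)
    have hinner : DifferentiableAt ℝ (fun z => (⟪d z, pdx i d z⟫ : ℝ)) z :=
      (hdd z).inner ℝ (hud i z)
    have : pdx i (pdx i f) z = fderiv ℝ (fun z => 2 * ⟪d z, pdx i d z⟫) z (ee i, 0) := by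
      rw [show pdx i (pdx i f) z = fderiv ℝ (pdx i f) z (ee i, 0) from rfl, hrw]
    rw [this, fderiv_const_mul hinner 2, ContinuousLinearMap.smul_apply, smul_eq_mul,
      fderiv_inner_apply ℝ (hdd z) (hud i z)]
    have : fderiv ℝ d z (ee i, 0) = pdx i d z := rfl
    rw [this, real_inner_self_eq_norm_sq]
    have : fderiv ℝ (pdx i d) z (ee i, 0) = pdx i (pdx i d) z := rfl
    rw [this]
    ring
  -- the three sign facts at the maximum point
  have hB : ∀ i : Fin 2, (⟪d (x₀, t₀), pdx i d (x₀, t₀)⟫ : ℝ) = 0 := by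
    intro i
    have hline := fun s => MP.line_hasDerivAt hfd ((x₀, t₀) : E2 × ℝ) (ee i, 0) s
    have hpt : ∀ s : ℝ, ((x₀, t₀) : E2 × ℝ) + s • ((ee i, 0) : E2 × ℝ)
        = (x₀ + s • ee i, t₀) := by
      intro s
      simp [Prod.ext_iff]
    have hmaxg : ∀ s : ℝ, f ((x₀, t₀) + s • ((ee i, 0) : E2 × ℝ))
        ≤ f ((x₀, t₀) + (0:ℝ) • ((ee i, 0) : E2 × ℝ)) := by
      intro s
      rw [hpt s, hpt 0]
      simpa using hM (x₀ + s • ee i) t₀ ht₀Icc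
    have hloc : IsLocalMax (fun s : ℝ => f ((x₀, t₀) + s • ((ee i, 0) : E2 × ℝ))) 0 :=
      Filter.Eventually.of_forall hmaxg
    have h0 := hloc.hasDerivAt_eq_zero (hline 0)
    rw [show ((x₀, t₀) : E2 × ℝ) + (0:ℝ) • ((ee i, 0) : E2 × ℝ) = (x₀, t₀) by simp] at h0
    have : pdx i f (x₀, t₀) = 0 := h0
    rw [hpdx_f i] at this
    linarith
  have hC : ∀ i : Fin 2, (⟪d (x₀, t₀), pdx i (pdx i d) (x₀, t₀)⟫ : ℝ) ≤ 0 := by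
    intro i
    have hline := fun s => MP.line_hasDerivAt hfd ((x₀, t₀) : E2 × ℝ) (ee i, 0) s
    have hline' := fun s => MP.line_hasDerivAt (hfdiffx i) ((x₀, t₀) : E2 × ℝ) (ee i, 0) s
    have hpt : ∀ s : ℝ, ((x₀, t₀) : E2 × ℝ) + s • ((ee i, 0) : E2 × ℝ)
        = (x₀ + s • ee i, t₀) := by
      intro s
      simp [Prod.ext_iff]
    have hmaxg : ∀ s : ℝ, f ((x₀, t₀) + s • ((ee i, 0) : E2 × ℝ))
        ≤ f ((x₀, t₀) + (0:ℝ) • ((ee i, 0) : E2 × ℝ)) := by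
      intro s
      rw [hpt s, hpt 0]
      simpa using hM (x₀ + s • ee i) t₀ ht₀Icc
    have hc2 : pdx i (pdx i f) (x₀, t₀) ≤ 0 := by
      have h2 : HasDerivAt (fun s : ℝ => pdx i f ((x₀, t₀) + s • ((ee i, 0) : E2 × ℝ)))
          (pdx i (pdx i f) (x₀, t₀)) 0 := by
        have := hline' 0
        rw [show ((x₀, t₀) : E2 × ℝ) + (0:ℝ) • ((ee i, 0) : E2 × ℝ) = (x₀, t₀) by simp] at this
        exact this
      exact MP.secondDeriv_nonpos_of_max hline h2 hmaxg
    rw [hpdx2_f i] at hc2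
    nlinarith [sq_nonneg ‖pdx i d (x₀, t₀)‖]
  have hA : (0:ℝ) ≤ ⟪d (x₀, t₀), pdt d (x₀, t₀)⟫ := by
    have hline := fun s => MP.line_hasDerivAt hfd ((x₀, (0:ℝ)) : E2 × ℝ) (0, 1) s
    have hpt : ∀ s : ℝ, ((x₀, (0:ℝ)) : E2 × ℝ) + s • ((0, 1) : E2 × ℝ) = (x₀, s) := by
      intro s
      simp [Prod.ext_iff]
    have h1 : HasDerivAt (fun s : ℝ => f ((x₀, (0:ℝ)) + s • ((0, 1) : E2 × ℝ)))
        (pdt f (x₀, t₀)) t₀ := by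
      have := hline t₀
      rw [hpt t₀] at this
      exact this
    have hmaxg : ∀ s ∈ Set.Icc (0:ℝ) T, f ((x₀, (0:ℝ)) + s • ((0, 1) : E2 × ℝ))
        ≤ f ((x₀, (0:ℝ)) + t₀ • ((0, 1) : E2 × ℝ)) := by
      intro s hs
      rw [hpt s, hpt t₀]
      exact hM x₀ s hs
    have := MP.deriv_nonneg_of_max h1 hmaxg ht₀pos ht₀Icc.2
    rw [hpdt_f] at this
    linarith
  -- take the inner product of the PDE with d
  have hin := congrArg (fun y : E3 => (⟪d (x₀, t₀), y⟫ : ℝ)) (heq x₀ t₀ ht₀Icc)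
  simp only [inner_add_right, real_inner_smul_right] at hin
  rw [show lapx d (x₀, t₀) = pdx 0 (pdx 0 d) (x₀, t₀) + pdx 1 (pdx 1 d) (x₀, t₀) from rfl,
    inner_add_right] at hin
  rw [hB 0, hB 1] at hin
  have hDD : (⟪d (x₀, t₀), d (x₀, t₀)⟫ : ℝ) = M := rfl
  have hnormM : ‖d (x₀, t₀)‖ ^ 2 = M := (hfnorm (x₀, t₀)).symm
  rw [hDD, hnormM] at hin
  have hRHSneg : (1 - M) / ε ^ 2 * M < 0 := by
    have h1 : (1 - M) / ε ^ 2 < 0 := div_neg_of_neg_of_pos (by linarith) (by positivity)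
    exact mul_neg_of_neg_of_pos h1 (by linarith)
  have hC0 := hC 0
  have hC1 := hC 1
  linarith [hA, hin, hC0, hC1, hRHSneg]
end
end

section
/- Let C ≥ 2, set θ₀ = 1/(32 C²), and let 0 < ε₀ < (7/32) θ₀ √π. Let x₀ ∈ ℝ², r₁ > 0, 0 < ε ≤ 1 with θ₀ ε ≤ r₁/2, and let u : B_{r₁}(x₀) → ℝ³ be continuous with |u| ≤ 1, satisfying |u(x) − u(y)| ≤ C (|x−y|/ε)^{1/2} for all x, y ∈ B_{r₁}(x₀) and ∫_{B_{r₁}(x₀)} (1/(4ε²)) (1−|u(x)|²)² dx ≤ ε₀². Then |u(x)| ≥ ½ for all x ∈ B_{r₁/2}(x₀). -/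
/-!
Suppose `|u(x)| < 1/2` at some `x` with `|x - x₀| < r₁/2`. On the ball `B_{θ₀ε}(x)`, which lies
inside `B_{r₁}(x₀)`, the Hölder estimate gives `|u(y) - u(x)| ≤ C √θ₀ ≤ 1/4`, hence `|u| ≤ 3/4` and
the penalization density is at least `(7/16)² / (4ε²)`. Integrating over this disc of area
`π θ₀² ε²` yields `((7/32) θ₀ √π)² ≤ ε₀²`, contradicting the choice of `ε₀`.
-/

open MeasureTheory Real Filter Topology

noncomputable section

open Metric

lemma mul_sqrt_div_le_quarter {C ε d : ℝ} (hC : 0 < C) (hε : 0 < ε)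
    (hd : d ≤ ε / (16 * C ^ 2)) : C * √(d / ε) ≤ 1 / 4 := by
  have hdiv : d / ε ≤ (1 / (4 * C)) ^ 2 := by
    rw [div_le_iff₀ hε]
    calc d ≤ ε / (16 * C ^ 2) := hd
      _ = (1 / (4 * C)) ^ 2 * ε := by field_simp; ring
  calc C * √(d / ε) ≤ C * (1 / (4 * C)) :=
        mul_le_mul_of_nonneg_left (Real.sqrt_le_iff.2 ⟨by positivity, hdiv⟩) hC.le
    _ = 1 / 4 := by field_simp

lemma norm_le_norm_add_quarter_of_holder {X F : Type*} [SeminormedAddCommGroup X]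
    [SeminormedAddCommGroup F] {s : Set X} {u : X → F} {C ε : ℝ} (hC : 0 < C) (hε : 0 < ε)
    (hhold : ∀ x ∈ s, ∀ y ∈ s, ‖u x - u y‖ ≤ C * √(‖x - y‖ / ε))
    {x y : X} (hx : x ∈ s) (hy : y ∈ s) (hxy : ‖x - y‖ ≤ ε / (16 * C ^ 2)) :
    ‖u y‖ ≤ ‖u x‖ + 1 / 4 := by
  have hclose : ‖u y - u x‖ ≤ 1 / 4 := by
    rw [norm_sub_rev]
    exact (hhold x hx y hy).trans (mul_sqrt_div_le_quarter hC hε hxy)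
  linarith [norm_le_norm_add_norm_sub' (u y) (u x)]

lemma sq_one_sub_sq_le_one {t : ℝ} (ht0 : 0 ≤ t) (ht1 : t ≤ 1) : (1 - t ^ 2) ^ 2 ≤ 1 :=
  pow_le_one₀ (by nlinarith) (by nlinarith)

lemma seven_div_sixteen_sq_le_sq_one_sub_sq {t : ℝ} (ht0 : 0 ≤ t) (ht : t ≤ 3 / 4) :
    (7 / 16) ^ 2 ≤ (1 - t ^ 2) ^ 2 :=
  pow_le_pow_left₀ (by norm_num) (by nlinarith) 2

lemma integrableOn_penalty {X F : Type*} [MeasurableSpace X] [TopologicalSpace X]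
    [OpensMeasurableSpace X] [SecondCountableTopology X] [SeminormedAddCommGroup F]
    {μ : Measure X} {s : Set X} (hs : MeasurableSet s) (hμs : μ s < ⊤) {u : X → F}
    (hu : ContinuousOn u s) (hu1 : ∀ x ∈ s, ‖u x‖ ≤ 1) (c : ℝ) :
    IntegrableOn (fun x ↦ c * (1 - ‖u x‖ ^ 2) ^ 2) s μ := by
  refine .of_bound hμs ?_ |c| ?_
  · exact ContinuousOn.aestronglyMeasurable
      (continuousOn_const.mul ((continuousOn_const.sub (hu.norm.pow 2)).pow 2)) hs
  · filter_upwards [self_mem_ae_restrict hs] with x hx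
    rw [norm_mul, Real.norm_of_nonneg (sq_nonneg _)]
    exact mul_le_of_le_one_right (abs_nonneg c) (sq_one_sub_sq_le_one (norm_nonneg _) (hu1 x hx))

lemma mul_measureReal_le_setIntegral {X : Type*} [MeasurableSpace X] {μ : Measure X}
    {s t : Set X} {f : X → ℝ} {c : ℝ} (hs : MeasurableSet s) (ht : MeasurableSet t)
    (hμt : μ t ≠ ⊤) (hts : t ⊆ s) (hf : IntegrableOn f s μ) (hf0 : ∀ x ∈ s, 0 ≤ f x)
    (hc : ∀ x ∈ t, c ≤ f x) :
    c * μ.real t ≤ ∫ x in s, f x ∂μ :=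
  calc c * μ.real t ≤ ∫ x in t, f x ∂μ :=
        setIntegral_ge_of_const_le_real ht hμt hc (hf.mono_set hts)
    _ ≤ ∫ x in s, f x ∂μ :=
        setIntegral_mono_set hf ((ae_restrict_iff' hs).2 (.of_forall hf0)) hts.eventuallyLE

lemma measureReal_ball_fin_two (x : EuclideanSpace ℝ (Fin 2)) {r : ℝ} (hr : 0 ≤ r) :
    volume.real (ball x r) = π * r ^ 2 := by
  rw [measureReal_def, EuclideanSpace.volume_ball_fin_two, ENNReal.toReal_mul,
    ENNReal.toReal_pow, ENNReal.toReal_ofReal hr, ENNReal.toReal_ofReal pi_pos.le, mul_comm]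

theorem modulus_lower_bound_general
    (C : ℝ) (hC : 2 ≤ C) (θ₀ : ℝ) (hθ₀ : θ₀ = 1/(32*C^2))
    (ε₀ : ℝ) (hε₀pos : 0 < ε₀) (hε₀ : ε₀ < (7/32) * θ₀ * Real.sqrt π)
    (x₀ : E2) (r₁ : ℝ)
    (ε : ℝ) (hε : 0 < ε) (hscale : θ₀ * ε ≤ r₁/2)
    (u : E2 → E3)
    (hu : ContinuousOn u (Metric.ball x₀ r₁))
    (hu1 : ∀ x ∈ Metric.ball x₀ r₁, ‖u x‖ ≤ 1)
    (hhold : ∀ x ∈ Metric.ball x₀ r₁, ∀ y ∈ Metric.ball x₀ r₁,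
      ‖u x - u y‖ ≤ C * Real.sqrt (‖x - y‖ / ε))
    (hpen : (∫ x in Metric.ball x₀ r₁, 1/(4*ε^2) * (1 - ‖u x‖ ^ 2) ^ 2) ≤ ε₀ ^ 2) :
    ∀ x ∈ Metric.ball x₀ (r₁/2), (1:ℝ)/2 ≤ ‖u x‖ := by
  intro x hx
  by_contra! hsmall
  have hC0 : 0 < C := by linarith
  have hρ : 0 < θ₀ * ε := by rw [hθ₀]; positivity
  have hsub : ball x (θ₀ * ε) ⊆ ball x₀ r₁ :=
    ball_subset_ball' (by linarith [mem_ball.1 hx])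
  have hmod : ∀ y ∈ ball x (θ₀ * ε), ‖u y‖ ≤ 3 / 4 := by
    intro y hy
    have hxy : ‖x - y‖ ≤ ε / (16 * C ^ 2) := by
      rw [← dist_eq_norm, dist_comm]
      calc dist y x ≤ θ₀ * ε := (mem_ball.1 hy).le
        _ ≤ ε / (16 * C ^ 2) := by rw [hθ₀]; field_simp; nlinarith
    linarith [norm_le_norm_add_quarter_of_holder hC0 hε hhold (hsub (mem_ball_self hρ)) (hsub hy)
      hxy]
  have henergy := mul_measureReal_le_setIntegral (μ := volume) measurableSet_ball
    measurableSet_ball measure_ball_lt_top.ne hsub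
    (integrableOn_penalty measurableSet_ball measure_ball_lt_top hu hu1 _)
    (fun y _ ↦ by positivity)
    (fun y hy ↦ mul_le_mul_of_nonneg_left
      (seven_div_sixteen_sq_le_sq_one_sub_sq (norm_nonneg _) (hmod y hy))
      (by positivity : (0 : ℝ) ≤ 1 / (4 * ε ^ 2)))
  have hcalc : 1 / (4 * ε ^ 2) * (7 / 16) ^ 2 * volume.real (ball x (θ₀ * ε)) =
      ((7 / 32) * θ₀ * √π) ^ 2 := by
    rw [measureReal_ball_fin_two x hρ.le, mul_pow, mul_pow, Real.sq_sqrt pi_pos.le]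
    field_simp
    ring
  have := pow_lt_pow_left₀ hε₀ hε₀pos.le two_ne_zero
  linarith

/-- **Lower bound on the modulus (Step 2 of Theorem 3.1).** If `u` is continuous with
`|u| ≤ 1` on `B_{r₁}(x₀)`, satisfies the Hölder estimate `|u(x)−u(y)| ≤ C(|x−y|/ε)^{1/2}`,
and the penalization energy is smaller than `ε₀² < ((7/32)θ₀√π)²` with `θ₀ = 1/(32C²)`,
then `|u| ≥ ½` on `B_{r₁/2}(x₀)`. -/
theorem modulus_lower_bound
    (C : ℝ) (hC : 2 ≤ C) (θ₀ : ℝ) (hθ₀ : θ₀ = 1/(32*C^2))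
    (ε₀ : ℝ) (hε₀pos : 0 < ε₀) (hε₀ : ε₀ < (7/32) * θ₀ * Real.sqrt π)
    (x₀ : E2) (r₁ : ℝ) (hr₁ : 0 < r₁)
    (ε : ℝ) (hε : 0 < ε) (hε1 : ε ≤ 1) (hscale : θ₀ * ε ≤ r₁/2)
    (u : E2 → E3)
    (hu : ContinuousOn u (Metric.ball x₀ r₁))
    (hu1 : ∀ x ∈ Metric.ball x₀ r₁, ‖u x‖ ≤ 1)
    (hhold : ∀ x ∈ Metric.ball x₀ r₁, ∀ y ∈ Metric.ball x₀ r₁,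
      ‖u x - u y‖ ≤ C * Real.sqrt (‖x - y‖ / ε))
    (hpen : (∫ x in Metric.ball x₀ r₁, 1/(4*ε^2) * (1 - ‖u x‖ ^ 2) ^ 2) ≤ ε₀ ^ 2) :
    ∀ x ∈ Metric.ball x₀ (r₁/2), (1:ℝ)/2 ≤ ‖u x‖ :=
  modulus_lower_bound_general C hC θ₀ hθ₀ ε₀ hε₀pos hε₀ x₀ r₁ ε hε hscale u hu hu1 hhold hpen
end
end
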